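/- Let m ≥ 0 be an integer, c ∈ ℝ, and define Φ : ℂ∖{0} → ℝ³ = ℝ² × ℝ by Φ(z) = (z^{m+1}, c), where z^{m+1} ∈ ℂ is identified with a point of ℝ². Suppose δ_k → 0⁺, ρ_k → +∞, and φ_k : {z ∈ ℂ : δ_k < |z| < ρ_k} → ℝ³ are smooth injective immersions (embeddings) such that φ_k converges to Φ in C¹ on every compact subset of ℂ∖{0}. Suppose in addition there exist 0 < a < b such that for all sufficiently large k, {z in the domain of φ_k : 1/4 ≤ |(φ_k¹(z), φ_k²(z))| ≤ 4} ⊆ {z : a ≤ |z| ≤ b}, where (φ_k¹, φ_k²) are the first two components of φ_k. Then m = 0. -/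

import Mathlib

/-!
Suppose `m + 1 = n ≥ 2`. For large `k` the planar part `F` of `φ_k` is `C¹`-close to
`z ↦ z ^ n` on the annulus `1/2 ≤ |z| ≤ 2`, so a contraction argument solves `F (ζ t) = e^{it}`
with `ζ t` near the root `e^{it/n}`, continuously in `t`. The curve `ζ` closes up only after
`n` turns, and `ζ (t + 2π) ≠ ζ t` lie over the same point of the plane. If the heights
`h t = φ_k (ζ t) 2` satisfied `h (t + 2π) ≠ h t` for all `t`, then `h (t + 2π) - h t` would have
constant sign, contradicting that its values at `t = 0, 2π, …, 2π(n-1)` telescope to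
`h (2πn) - h 0 = 0`. So two distinct points of the annulus have the same image under `φ_k`,
contradicting injectivity.
-/

open MeasureTheory Filter Metric Topology Real

noncomputable section

/-- We model ℝ³ as `Fin 3 → ℝ`. -/
abbrev V3 := Fin 3 → ℝ

/-- The Euclidean dot product on ℝ³. -/
def dot3 (a b : V3) : ℝ := a 0 * b 0 + a 1 * b 1 + a 2 * b 2

/-- The Euclidean norm on ℝ³. -/
def nrm3 (a : V3) : ℝ := Real.sqrt (dot3 a a)

/-- The cross product on ℝ³. -/
def cross3 (a b : V3) : V3 :=
  ![a 1 * b 2 - a 2 * b 1, a 2 * b 0 - a 0 * b 2, a 0 * b 1 - a 1 * b 0]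

/-- The partial derivative ∂ₓ f, identifying ℂ with ℝ². -/
def pdx (f : ℂ → V3) (z : ℂ) : V3 := fderiv ℝ f z 1

/-- The partial derivative ∂_y f, identifying ℂ with ℝ². -/
def pdy (f : ℂ → V3) (z : ℂ) : V3 := fderiv ℝ f z Complex.I

/-- The conformal factor u, defined by e^{2u} = |∂ₓ f|². -/
def confFactor (f : ℂ → V3) (z : ℂ) : ℝ := Real.log (dot3 (pdx f z) (pdx f z)) / 2

/-- The unit normal n = (∂ₓ f × ∂_y f)/|∂ₓ f × ∂_y f|. -/
def unitNormal (f : ℂ → V3) (z : ℂ) : V3 :=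
  (nrm3 (cross3 (pdx f z) (pdy f z)))⁻¹ • cross3 (pdx f z) (pdy f z)

/-- A_{xx} = (∂ₓ∂ₓ f)·n. -/
def Axx (f : ℂ → V3) (z : ℂ) : ℝ := dot3 (pdx (pdx f) z) (unitNormal f z)

/-- A_{xy} = (∂_y∂ₓ f)·n. -/
def Axy (f : ℂ → V3) (z : ℂ) : ℝ := dot3 (pdy (pdx f) z) (unitNormal f z)

/-- A_{yy} = (∂_y∂_y f)·n. -/
def Ayy (f : ℂ → V3) (z : ℂ) : ℝ := dot3 (pdy (pdy f) z) (unitNormal f z)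

/-- |A|² = e^{-4u}(A_{xx}² + 2A_{xy}² + A_{yy}²). -/
def normA2 (f : ℂ → V3) (z : ℂ) : ℝ :=
  Real.exp (-4 * confFactor f z) * (Axx f z ^ 2 + 2 * Axy f z ^ 2 + Ayy f z ^ 2)

/-- The mean curvature H = e^{-2u}(A_{xx} + A_{yy}). -/
def meanH (f : ℂ → V3) (z : ℂ) : ℝ := Real.exp (-2 * confFactor f z) * (Axx f z + Ayy f z)

/-- The Gauss curvature K = e^{-4u}(A_{xx}A_{yy} − A_{xy}²). -/
def gaussK (f : ℂ → V3) (z : ℂ) : ℝ :=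
  Real.exp (-4 * confFactor f z) * (Axx f z * Ayy f z - Axy f z ^ 2)

/-- The flat Laplacian ∂ₓ² + ∂_y² of a scalar function on ℂ ≅ ℝ². -/
def lap (h : ℂ → ℝ) (z : ℂ) : ℝ :=
  fderiv ℝ (fun w => fderiv ℝ h w 1) z 1 +
    fderiv ℝ (fun w => fderiv ℝ h w Complex.I) z Complex.I

/-- A smooth conformal immersion on an open set U ⊆ ℂ:
∂ₓ f · ∂_y f = 0 and |∂ₓ f| = |∂_y f| > 0 everywhere on U. -/
def ConformalImmersionOn (f : ℂ → V3) (U : Set ℂ) : Prop :=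
  ContDiffOn ℝ (⊤ : ℕ∞) f U ∧ ∀ z ∈ U,
    dot3 (pdx f z) (pdy f z) = 0 ∧ nrm3 (pdx f z) = nrm3 (pdy f z) ∧ 0 < nrm3 (pdx f z)

/-- The Willmore equation e^{-2u}Δ H + ½(H² − 4K)H = 0 on U. -/
def WillmoreOn (f : ℂ → V3) (U : Set ℂ) : Prop :=
  ∀ z ∈ U,
    Real.exp (-2 * confFactor f z) * lap (meanH f) z +
      (1 / 2) * (meanH f z ^ 2 - 4 * gaussK f z) * meanH f z = 0

/-- The induced area density e^{2u} (so that dμ = e^{2u} dL²). -/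
def areaDensity (f : ℂ → V3) (z : ℂ) : ENNReal :=
  ENNReal.ofReal (Real.exp (2 * confFactor f z))

/-- Finite total curvature: ∫_U |A|² dμ < ∞. -/
def FiniteTotalCurvature (f : ℂ → V3) (U : Set ℂ) : Prop :=
  ∫⁻ z in U, ENNReal.ofReal (normA2 f z) * areaDensity f z < ⊤

/-- A piecewise C¹ curve on [0,1): continuous, and differentiable away from a finite set. -/
def PiecewiseC1 (γ : ℝ → ℂ) : Prop :=
  ContinuousOn γ (Set.Ico 0 1) ∧
    ∃ S : Finset ℝ, ∀ t ∈ Set.Ico (0 : ℝ) 1, t ∉ S → DifferentiableAt ℝ γ t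

/-- Completeness (at infinity) of the induced metric: every piecewise C¹ curve
γ : [0,1) → U with |γ(t)| → ∞ as t → 1 has infinite length. -/
def CompleteOn (f : ℂ → V3) (U : Set ℂ) : Prop :=
  ∀ γ : ℝ → ℂ, PiecewiseC1 γ → (∀ t ∈ Set.Ico (0 : ℝ) 1, γ t ∈ U) →
    Tendsto (fun t => ‖γ t‖) (𝓝[<] (1 : ℝ)) atTop →
    ∫⁻ t in Set.Ico (0 : ℝ) 1,
      ENNReal.ofReal (Real.exp (confFactor f (γ t)) * ‖deriv γ t‖) = ⊤

/-- The image area measure of `f` (restricted to `U`) has density 1 at infinity: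
μ({z ∈ U : |f(z)| < ρ})/(π ρ²) → 1 as ρ → ∞. -/
def DensityOneAtInfinity (f : ℂ → V3) (U : Set ℂ) : Prop :=
  Tendsto (fun ρ : ℝ =>
      (∫⁻ z in {z ∈ U | nrm3 (f z) < ρ}, areaDensity f z).toReal / (π * ρ ^ 2))
    atTop (𝓝 1)

open Function Set
open scoped NNReal

theorem exists_continuous_fixedPoint_of_contracting {Θ X : Type*} [TopologicalSpace Θ]
    [MetricSpace X] {T : Θ → X → X} {s : Set X} {K : ℝ≥0} (hK : K < 1) (hs : IsComplete s)
    (hne : s.Nonempty) (hmaps : ∀ θ, MapsTo (T θ) s s) (hlip : ∀ θ, LipschitzOnWith K (T θ) s)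
    (hcont : ∀ x ∈ s, Continuous fun θ => T θ x) :
    ∃ u : Θ → X, Continuous u ∧
      ∀ θ, u θ ∈ s ∧ IsFixedPt (T θ) (u θ) ∧ ∀ x ∈ s, IsFixedPt (T θ) x → x = u θ := by
  obtain ⟨x₀, hx₀⟩ := hne
  have hfix (θ : Θ) : ∃ y ∈ s, IsFixedPt (T θ) y :=
    let ⟨y, hy, hfy, _⟩ := ContractingWith.exists_fixedPoint' hs (hmaps θ)
      ⟨hK, (hlip θ).mapsToRestrict (hmaps θ)⟩ hx₀ (edist_ne_top _ _)
    ⟨y, hy, hfy⟩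
  choose u hus hufix using hfix
  have hK' : (K : ℝ) < 1 := by exact_mod_cast hK
  have hdist (θ θ₀ : Θ) : dist (u θ) (u θ₀) ≤ dist (T θ (u θ₀)) (T θ₀ (u θ₀)) / (1 - K) := by
    have hlip' := (hlip θ).dist_le_mul _ (hus θ) _ (hus θ₀)
    rw [(hufix θ).eq] at hlip'
    have htri := dist_triangle (u θ) (T θ (u θ₀)) (T θ₀ (u θ₀))
    rw [(hufix θ₀).eq] at htri ⊢
    rw [le_div_iff₀ (sub_pos.2 hK')]
    linarith
  refine ⟨u, continuous_iff_continuousAt.2 fun θ₀ => ?_,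
    fun θ => ⟨hus θ, hufix θ, fun x hx hfx => ?_⟩⟩
  · rw [ContinuousAt, tendsto_iff_dist_tendsto_zero]
    refine squeeze_zero (fun _ => dist_nonneg) (fun θ => hdist θ θ₀) ?_
    simpa using (((hcont _ (hus θ₀)).dist (continuous_const (y := T θ₀ (u θ₀)))).div_const
      (1 - (K : ℝ))).tendsto θ₀
  · have h := (hlip θ).dist_le_mul x hx (u θ) (hus θ)
    rw [hfx.eq, (hufix θ).eq] at h
    exact dist_le_zero.1 (by nlinarith [dist_nonneg (x := x) (y := u θ)])

theorem Function.Periodic.exists_apply_add_eq {h : ℝ → ℝ} {τ : ℝ} {n : ℕ}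
    (hper : Periodic h (n * τ)) (hh : Continuous h) (hn : n ≠ 0) : ∃ t, h (t + τ) = h t := by
  set g : ℝ → ℝ := fun t => h (t + τ) - h t
  have hsum : ∑ j ∈ Finset.range n, g (j * τ) = 0 := by
    have := Finset.sum_range_sub (fun j : ℕ => h (j * τ)) n
    simp only [Nat.cast_succ, add_one_mul, Nat.cast_zero, zero_mul, hper.eq, sub_self] at this
    exact this
  have hne : (Finset.range n).Nonempty := Finset.nonempty_range_iff.2 hn
  obtain ⟨i, -, hi⟩ := Finset.exists_le_of_sum_le (f := fun j : ℕ => g (j * τ))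
    (g := fun _ => 0) hne (by simp [hsum])
  obtain ⟨j, -, hj⟩ := Finset.exists_le_of_sum_le (f := fun _ => 0)
    (g := fun j : ℕ => g (j * τ)) hne (by simp [hsum])
  obtain ⟨t, ht⟩ := intermediate_value_univ (i * τ : ℝ) (j * τ) (f := g) (by fun_prop) ⟨hi, hj⟩
  exact ⟨t, sub_eq_zero.1 ht⟩

theorem norm_pow_sub_one_le {R : Type*} [NormedRing R] [NormOneClass R] {x : R} {r : ℝ}
    (hx : ‖x - 1‖ ≤ r) (i : ℕ) : ‖x ^ i - 1‖ ≤ (1 + r) ^ i - 1 := by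
  have hx1 : ‖x‖ ≤ 1 + r := by
    simpa [add_comm] using (norm_add_le (x - 1) 1).trans (by simpa using hx)
  induction i with
  | zero => simp
  | succ i ih =>
    calc ‖x ^ (i + 1) - 1‖ = ‖x * (x ^ i - 1) + (x - 1)‖ := by
          rw [pow_succ', mul_sub, mul_one]; abel_nf
      _ ≤ ‖x‖ * ‖x ^ i - 1‖ + ‖x - 1‖ := (norm_add_le _ _).trans (by gcongr; exact norm_mul_le _ _)
      _ ≤ (1 + r) * ((1 + r) ^ i - 1) + r := by gcongr; exact (norm_nonneg _).trans hx1
      _ = (1 + r) ^ (i + 1) - 1 := by ring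

theorem norm_pow_sub_one_le_quarter {R : Type*} [NormedRing R] [NormOneClass R] {x : R} {m : ℕ}
    (hx : m * ‖x - 1‖ ≤ 1 / 8) : ‖x ^ m - 1‖ ≤ 1 / 4 := by
  set r := ‖x - 1‖
  have hexp : Real.exp (1 / 8) < 1 / (1 - 1 / 8) :=
    Real.exp_bound_div_one_sub_of_interval' (by norm_num) (by norm_num)
  calc ‖x ^ m - 1‖ ≤ (1 + r) ^ m - 1 := norm_pow_sub_one_le le_rfl m
    _ ≤ Real.exp r ^ m - 1 := by
        gcongr (?_ : ℝ) ^ m - 1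
        linarith [Real.add_one_le_exp r]
    _ = Real.exp (m * r) - 1 := by rw [← Real.exp_nat_mul]
    _ ≤ Real.exp (1 / 8) - 1 := by gcongr
    _ ≤ 1 / 4 := by linarith

theorem norm_pow_sub_natCast_mul_sub_le {n : ℕ} {r : ℝ} (hr : n * r ≤ 1 / 8) {u v : ℂ}
    (hu : u ∈ closedBall 1 r) (hv : v ∈ closedBall 1 r) :
    ‖(u ^ n - n * u) - (v ^ n - n * v)‖ ≤ n / 4 * ‖u - v‖ := by
  have hderiv (z : ℂ) : HasDerivAt (fun z : ℂ => z ^ n - n * z) (n * (z ^ (n - 1) - 1)) z :=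
    ((hasDerivAt_pow n z).sub ((hasDerivAt_id' z).const_mul (n : ℂ))).congr_deriv (by ring)
  refine (convex_closedBall 1 r).norm_image_sub_le_of_norm_deriv_le
    (fun z _ => (hderiv z).differentiableAt) (fun z hz => ?_) hv hu
  rw [(hderiv z).deriv, norm_mul, Complex.norm_natCast, div_eq_mul_one_div]
  gcongr
  refine norm_pow_sub_one_le_quarter (le_trans ?_ hr)
  rw [mem_closedBall, dist_eq_norm] at hz
  exact mul_le_mul (Nat.cast_le.2 (Nat.sub_le n 1)) hz (norm_nonneg _) (Nat.cast_nonneg _)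

theorem four_div_le_norm_exp_two_pi_div_sub_one {n : ℕ} (hn : 2 ≤ n) :
    4 / n ≤ ‖Complex.exp (Complex.I * ↑(2 * π / n)) - 1‖ := by
  have hn' : (2 : ℝ) ≤ n := by exact_mod_cast hn
  have hsin : 2 / π * (π / n) ≤ Real.sin (π / n) :=
    Real.mul_le_sin (by positivity) (div_le_div_of_nonneg_left pi_pos.le two_pos hn')
  rw [Complex.norm_exp_I_mul_ofReal_sub_one, show 2 * π / n / 2 = π / n by ring, norm_mul,
    Real.norm_of_nonneg (by positivity : (0 : ℝ) ≤ 2)]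
  calc 4 / (n : ℝ) = 2 * (2 / π * (π / n)) := by field_simp; ring
    _ ≤ 2 * ‖Real.sin (π / n)‖ := by gcongr; exact hsin.trans (Real.le_norm_self _)

def closedAnnulus (r R : ℝ) : Set ℂ := {z | r ≤ ‖z‖ ∧ ‖z‖ ≤ R}

theorem isCompact_closedAnnulus (r R : ℝ) : IsCompact (closedAnnulus r R) :=
  (isCompact_closedBall (0 : ℂ) R).of_isClosed_subset
    ((isClosed_le continuous_const continuous_norm).inter
      (isClosed_le continuous_norm continuous_const))
    fun _ hz => mem_closedBall_zero_iff.2 hz.2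

theorem closedAnnulus_subset_compl_zero {r : ℝ} (hr : 0 < r) (R : ℝ) :
    closedAnnulus r R ⊆ {0}ᶜ := fun z hz h0 => by
  simp [closedAnnulus, show z = 0 from h0] at hz; linarith [hz.1]

theorem closedBall_subset_closedAnnulus {A : ℂ} {r : ℝ} (hA : ‖A‖ = 1) (hr : r ≤ 1 / 2) :
    closedBall A r ⊆ closedAnnulus (1 / 2) 2 := fun z hz => by
  have := (abs_norm_sub_norm_le z A).trans (mem_closedBall_iff_norm.1 hz)
  rw [hA, abs_le] at this
  constructor <;> linarith

theorem mul_mem_closedBall_self {A u : ℂ} {r : ℝ} (hA : ‖A‖ = 1) (hu : u ∈ closedBall 1 r) :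
    A * u ∈ closedBall A r := by
  rwa [mem_closedBall_iff_norm, ← mul_sub_one, norm_mul, hA, one_mul, ← mem_closedBall_iff_norm]

def IsC1CloseToPowOn (n : ℕ) (ε : ℝ) (F : ℂ → ℂ) (K : Set ℂ) : Prop :=
  ∀ z ∈ K, DifferentiableAt ℝ F z ∧ ‖F z - z ^ n‖ ≤ ε ∧
    ‖fderiv ℝ F z - fderiv ℝ (fun w : ℂ => w ^ n) z‖ ≤ ε

/-- Newton's method for `F (A * u) = A ^ n`, with the derivative frozen at that of the model
`u ↦ (A * u) ^ n` at `u = 1`. -/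
def newtonStep (n : ℕ) (F : ℂ → ℂ) (A u : ℂ) : ℂ :=
  u - (n * A ^ n)⁻¹ * (F (A * u) - A ^ n)

theorem continuous_newtonStep {n : ℕ} {F : ℂ → ℂ} {K : Set ℂ} {A : ℝ → ℂ} {x : ℂ}
    (hF : ContinuousOn F K) (hA : Continuous A) (hA0 : ∀ t, A t ≠ 0) (hn : n ≠ 0)
    (hAx : ∀ t, A t * x ∈ K) : Continuous fun t => newtonStep n F (A t) x := by
  have hFx : Continuous fun t => F (A t * x) := hF.comp_continuous (by fun_prop) hAx
  have hne (t : ℝ) : (n : ℂ) * A t ^ n ≠ 0 := by simp [hn, hA0 t]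
  exact continuous_const.sub (((continuous_const.mul (hA.pow n)).inv₀ hne).mul
    (hFx.sub (hA.pow n)))

theorem newtonStep_eq_self {n : ℕ} {F : ℂ → ℂ} {A u : ℂ} (hn : n ≠ 0) (hA : A ≠ 0)
    (h : newtonStep n F A u = u) : F (A * u) = A ^ n := by
  rw [newtonStep, sub_eq_self, mul_eq_zero] at h
  exact sub_eq_zero.1 (h.resolve_left (by simp [hn, hA]))

namespace IsC1CloseToPowOn

variable {n : ℕ} {ε : ℝ} {F : ℂ → ℂ}

theorem norm_sub_pow_sub_sub_pow_le {K s : Set ℂ} (hF : IsC1CloseToPowOn n ε F K) (hs : Convex ℝ s)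
    (hsK : s ⊆ K) {x y : ℂ} (hx : x ∈ s) (hy : y ∈ s) :
    ‖(F x - x ^ n) - (F y - y ^ n)‖ ≤ ε * ‖x - y‖ := by
  refine hs.norm_image_sub_le_of_norm_fderiv_le (f := fun z => F z - z ^ n)
    (fun z hz => (hF z (hsK hz)).1.sub (by fun_prop)) (fun z hz => ?_) hy hx
  rw [fderiv_fun_sub (hF z (hsK hz)).1 (by fun_prop)]
  exact (hF z (hsK hz)).2.2

variable (hF : IsC1CloseToPowOn n ε F (closedAnnulus (1 / 2) 2)) (hn : n ≠ 0) (hε : ε ≤ 1 / 16)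
include hF hn hε

section

variable {A : ℂ} (hA : ‖A‖ = 1)
include hA

theorem lipschitzOnWith_newtonStep :
    LipschitzOnWith (1 / 2) (newtonStep n F A) (closedBall 1 (1 / (8 * n))) := by
  have hn1 : (1 : ℝ) ≤ n := by exact_mod_cast Nat.one_le_iff_ne_zero.2 hn
  have hr : (n : ℝ) * (1 / (8 * n)) ≤ 1 / 8 := by field_simp; rfl
  have hball : closedBall A (1 / (8 * n)) ⊆ closedAnnulus (1 / 2) 2 :=
    closedBall_subset_closedAnnulus hA (by field_simp; linarith)
  refine LipschitzOnWith.of_dist_le_mul fun u hu v hv => ?_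
  have hE := hF.norm_sub_pow_sub_sub_pow_le (convex_closedBall A _) hball
    (mul_mem_closedBall_self hA hu) (mul_mem_closedBall_self hA hv)
  rw [← mul_sub, norm_mul, hA, one_mul] at hE
  have hP := norm_pow_sub_natCast_mul_sub_le hr hu hv
  have hsplit : newtonStep n F A u - newtonStep n F A v =
      -(((u ^ n - n * u) - (v ^ n - n * v)) / n) -
        (n * A ^ n)⁻¹ * ((F (A * u) - (A * u) ^ n) - (F (A * v) - (A * v) ^ n)) := by
    have hA0 : A ≠ 0 := norm_ne_zero_iff.1 (by rw [hA]; exact one_ne_zero)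
    simp only [newtonStep, mul_pow]
    field_simp
    ring
  have hinv : ‖((n : ℂ) * A ^ n)⁻¹‖ = 1 / n := by simp [hA]
  rw [dist_eq_norm, dist_eq_norm, hsplit, NNReal.coe_div, NNReal.coe_one, NNReal.coe_ofNat]
  calc _ ≤ ‖((u ^ n - n * u) - (v ^ n - n * v)) / n‖ +
        ‖((n : ℂ) * A ^ n)⁻¹‖ * ‖(F (A * u) - (A * u) ^ n) - (F (A * v) - (A * v) ^ n)‖ := by
        rw [← norm_mul, ← norm_neg (_ / _)]; exact _root_.norm_sub_le _ _
    _ ≤ (n / 4 * ‖u - v‖) / n + 1 / n * (ε * ‖u - v‖) := by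
        rw [norm_div, Complex.norm_natCast, hinv]; gcongr
    _ = (1 / 4 + ε / n) * ‖u - v‖ := by field_simp
    _ ≤ 1 / 2 * ‖u - v‖ := by
        gcongr
        linarith [(div_le_iff₀ (by positivity : (0 : ℝ) < n)).2 (by linarith : ε ≤ 1 / 4 * n)]

theorem mapsTo_newtonStep :
    MapsTo (newtonStep n F A) (closedBall 1 (1 / (8 * n))) (closedBall 1 (1 / (8 * n))) := by
  have h1 : (1 : ℂ) ∈ closedBall 1 (1 / (8 * n)) := mem_closedBall_self (by positivity)
  have hstep1 : dist (newtonStep n F A 1) 1 ≤ ε / n := by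
    rw [dist_eq_norm, newtonStep, mul_one, sub_sub_cancel_left, norm_neg, norm_mul]
    simpa [hA, div_eq_inv_mul] using mul_le_mul_of_nonneg_left
      (hF A (by norm_num [closedAnnulus, hA])).2.1 (by positivity : (0 : ℝ) ≤ (n : ℝ)⁻¹)
  intro u hu
  have hlip := (hF.lipschitzOnWith_newtonStep hn hε hA).dist_le_mul u hu 1 h1
  rw [mem_closedBall] at hu ⊢
  calc dist (newtonStep n F A u) 1
      ≤ dist (newtonStep n F A u) (newtonStep n F A 1) + dist (newtonStep n F A 1) 1 :=
        dist_triangle _ _ _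
    _ ≤ 1 / 2 * (1 / (8 * n)) + 1 / 16 / n := by
        push_cast at hlip
        exact add_le_add (by linarith) (hstep1.trans (by gcongr))
    _ = 1 / (8 * n) := by field_simp; ring

end

theorem exists_lift :
    ∃ ζ : ℝ → ℂ, Continuous ζ ∧ Periodic ζ (n * (2 * π)) ∧
      ∀ t, F (ζ t) = Complex.exp (Complex.I * t) ∧
        ζ t ∈ closedBall (Complex.exp (Complex.I * ↑(t / n))) (1 / (8 * n)) := by
  set root : ℝ → ℂ := fun t => Complex.exp (Complex.I * ↑(t / n))
  have hn1 : (1 : ℝ) ≤ n := by exact_mod_cast Nat.one_le_iff_ne_zero.2 hn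
  have hroot_norm (t : ℝ) : ‖root t‖ = 1 := Complex.norm_exp_I_mul_ofReal _
  have hroot_ne (t : ℝ) : root t ≠ 0 := Complex.exp_ne_zero _
  have hroot_pow (t : ℝ) : root t ^ n = Complex.exp (Complex.I * t) := by
    rw [← Complex.exp_nat_mul]; congr 1; push_cast; field_simp
  have hroot_cont : Continuous root := by fun_prop
  have hroot_per : Periodic root (n * (2 * π)) := fun t => by
    simp only [root]
    rw [← Complex.exp_periodic (Complex.I * ↑(t / n))]
    congr 1; push_cast; field_simp
  have hmem (t : ℝ) {x : ℂ} (hx : x ∈ closedBall 1 (1 / (8 * n))) :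
      root t * x ∈ closedAnnulus (1 / 2) 2 :=
    closedBall_subset_closedAnnulus (hroot_norm t) (by field_simp; linarith)
      (mul_mem_closedBall_self (hroot_norm t) hx)
  have hFcont : ContinuousOn F (closedAnnulus (1 / 2) 2) := fun z hz =>
    (hF z hz).1.continuousAt.continuousWithinAt
  obtain ⟨u, hu_cont, hu⟩ := exists_continuous_fixedPoint_of_contracting
    (T := fun t => newtonStep n F (root t)) (K := 1 / 2) (by norm_num)
    isClosed_closedBall.isComplete (nonempty_closedBall.2 (by positivity))
    (fun t => hF.mapsTo_newtonStep hn hε (hroot_norm t))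
    (fun t => hF.lipschitzOnWith_newtonStep hn hε (hroot_norm t))
    (fun x hx => continuous_newtonStep hFcont hroot_cont hroot_ne hn fun t => hmem t hx)
  have hu_mem (t : ℝ) := (hu t).1
  have hu_fix (t : ℝ) := (hu t).2.1
  have hu_unique (t : ℝ) := (hu t).2.2
  refine ⟨fun t => root t * u t, by fun_prop, fun t => ?_,
    fun t => ⟨?_, mul_mem_closedBall_self (hroot_norm t) (hu_mem t)⟩⟩
  · have hT : newtonStep n F (root (t + n * (2 * π))) = newtonStep n F (root t) := by
      rw [hroot_per t]
    have hu_per := hu_unique t _ (hu_mem _) (hT ▸ hu_fix (t + n * (2 * π)))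
    simp only [hroot_per t, hu_per]
  · rw [← hroot_pow]
    exact newtonStep_eq_self hn (hroot_ne t) (hu_fix t)

end IsC1CloseToPowOn

theorem IsC1CloseToPowOn.exists_sheets {n : ℕ} {ε : ℝ} {F : ℂ → ℂ}
    (hF : IsC1CloseToPowOn n ε F (closedAnnulus (1 / 2) 2)) (hn : 2 ≤ n) (hε : ε ≤ 1 / 16) :
    ∃ ζ : ℝ → ℂ, Continuous ζ ∧ Periodic ζ (n * (2 * π)) ∧ ∀ t, ζ t ∈ closedAnnulus (1 / 2) 2 ∧
      F (ζ (t + 2 * π)) = F (ζ t) ∧ ζ (t + 2 * π) ≠ ζ t := by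
  obtain ⟨ζ, hζc, hζper, hζ⟩ := hF.exists_lift (by omega) hε
  have hn' : (2 : ℝ) ≤ n := by exact_mod_cast hn
  refine ⟨ζ, hζc, hζper, fun t => ⟨closedBall_subset_closedAnnulus
    (Complex.norm_exp_I_mul_ofReal _) (by field_simp; linarith) (hζ t).2, ?_, fun heq => ?_⟩⟩
  · rw [(hζ _).1, (hζ t).1, ← Complex.exp_periodic (Complex.I * t)]
    congr 1; push_cast; ring
  · set c := Complex.exp (Complex.I * ↑(t / n))
    have hrot : Complex.exp (Complex.I * ↑((t + 2 * π) / n)) - c =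
        c * (Complex.exp (Complex.I * ↑(2 * π / n)) - 1) := by
      rw [mul_sub, mul_one, ← Complex.exp_add]; congr 2; push_cast; ring
    have hfar : 4 / (n : ℝ) ≤ 2 * (1 / (8 * n)) :=
      calc 4 / (n : ℝ) ≤ ‖Complex.exp (Complex.I * ↑(2 * π / n)) - 1‖ :=
            four_div_le_norm_exp_two_pi_div_sub_one hn
        _ = dist (Complex.exp (Complex.I * ↑((t + 2 * π) / n))) c := by
            rw [dist_eq_norm, hrot, norm_mul, Complex.norm_exp_I_mul_ofReal, one_mul]
        _ ≤ dist (ζ (t + 2 * π)) (Complex.exp (Complex.I * ↑((t + 2 * π) / n))) +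
              dist (ζ t) c := by
            rw [heq]; exact dist_triangle_left _ _ _
        _ ≤ 1 / (8 * n) + 1 / (8 * n) := add_le_add (hζ _).2 (hζ t).2
        _ = 2 * (1 / (8 * n)) := by ring
    field_simp at hfar
    linarith

def toPlane : V3 →L[ℝ] ℂ :=
  Complex.equivRealProdCLM.symm.toContinuousLinearMap.comp
    ((ContinuousLinearMap.proj 0).prod (ContinuousLinearMap.proj 1))

@[simp]
theorem toPlane_re (v : V3) : (toPlane v).re = v 0 := by simp [toPlane]

@[simp]
theorem toPlane_im (v : V3) : (toPlane v).im = v 1 := by simp [toPlane]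

theorem norm_toPlane_le : ‖toPlane‖ ≤ 2 :=
  toPlane.opNorm_le_bound zero_le_two fun v =>
    calc ‖toPlane v‖ ≤ ‖v 0‖ + ‖v 1‖ := by
          simpa using Complex.norm_le_abs_re_add_abs_im (toPlane v)
      _ ≤ ‖v‖ + ‖v‖ := add_le_add (norm_le_pi_norm v 0) (norm_le_pi_norm v 1)
      _ = 2 * ‖v‖ := by ring

theorem eq_of_toPlane_eq {v w : V3} (h : toPlane v = toPlane w) (h2 : v 2 = w 2) : v = w := by
  funext i
  fin_cases i
  · simpa using congrArg Complex.re h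
  · simpa using congrArg Complex.im h
  · exact h2

theorem isC1CloseToPowOn_toPlane_comp {n : ℕ} {c ε : ℝ} {Φ f : ℂ → V3} {K : Set ℂ}
    (hΦ : ∀ z, Φ z = ![(z ^ n).re, (z ^ n).im, c]) (hf : ∀ z ∈ K, DifferentiableAt ℝ f z)
    (h0 : ∀ z ∈ K, dist (Φ z) (f z) ≤ ε) (h1 : ∀ z ∈ K, dist (fderiv ℝ Φ z) (fderiv ℝ f z) ≤ ε) :
    IsC1CloseToPowOn n (2 * ε) (fun z => toPlane (f z)) K := by
  have hpow (z : ℂ) : z ^ n = toPlane (Φ z) := by apply Complex.ext <;> simp [hΦ]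
  have hΦd : Differentiable ℝ Φ := by
    rw [funext hΦ]
    refine differentiable_pi.2 fun i => ?_
    fin_cases i <;> simp <;> fun_prop
  intro z hz
  have hfz : HasFDerivAt (fun w => toPlane (f w)) (toPlane.comp (fderiv ℝ f z)) z :=
    toPlane.hasFDerivAt.comp z (hf z hz).hasFDerivAt
  have hΦz : HasFDerivAt (fun w => toPlane (Φ w)) (toPlane.comp (fderiv ℝ Φ z)) z :=
    toPlane.hasFDerivAt.comp z (hΦd z).hasFDerivAt
  refine ⟨hfz.differentiableAt, ?_, ?_⟩
  · rw [hpow, ← map_sub]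
    refine (toPlane.le_opNorm _).trans (mul_le_mul norm_toPlane_le ?_ (norm_nonneg _) zero_le_two)
    rw [← dist_eq_norm, dist_comm]
    exact h0 z hz
  · rw [show (fun w : ℂ => w ^ n) = fun w => toPlane (Φ w) from funext hpow, hfz.fderiv,
      hΦz.fderiv, ← ContinuousLinearMap.comp_sub]
    refine (toPlane.opNorm_comp_le _).trans
      (mul_le_mul norm_toPlane_le ?_ (norm_nonneg _) zero_le_two)
    rw [← dist_eq_norm, dist_comm]
    exact h1 z hz

theorem multiplicity_one_of_embedded_limit_general (m : ℕ) (c : ℝ)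
    (Φ : ℂ → V3) (hΦ : ∀ z : ℂ, Φ z = ![(z ^ (m + 1)).re, (z ^ (m + 1)).im, c])
    (δ ρ : ℕ → ℝ)
    (hδ : Tendsto δ atTop (𝓝 0)) (hρ : Tendsto ρ atTop atTop)
    (φ : ℕ → ℂ → V3)
    (hφsmooth : ∀ k, ContDiffOn ℝ (⊤ : ℕ∞) (φ k) {z : ℂ | δ k < ‖z‖ ∧ ‖z‖ < ρ k})
    (hφinj : ∀ k, Set.InjOn (φ k) {z : ℂ | δ k < ‖z‖ ∧ ‖z‖ < ρ k})
    (hC1 : ∀ K : Set ℂ, IsCompact K → K ⊆ {(0 : ℂ)}ᶜ →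
      TendstoUniformlyOn (fun k => φ k) Φ atTop K ∧
      TendstoUniformlyOn (fun k z => fderiv ℝ (φ k) z) (fun z => fderiv ℝ Φ z) atTop K) :
    m = 0 := by
  by_contra hm
  set K := closedAnnulus (1 / 2) 2
  obtain ⟨hφ0, hφ1⟩ :=
    hC1 K (isCompact_closedAnnulus _ _) (closedAnnulus_subset_compl_zero (by norm_num) _)
  obtain ⟨k, hk0, hk1, hδk, hρk⟩ :=
    ((Metric.tendstoUniformlyOn_iff.1 hφ0 (1 / 32) (by norm_num)).and
      ((Metric.tendstoUniformlyOn_iff.1 hφ1 (1 / 32) (by norm_num)).and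
        ((hδ.eventually (gt_mem_nhds (by norm_num : (0 : ℝ) < 1 / 2))).and
          (hρ.eventually_gt_atTop 2)))).exists
  set U := {z : ℂ | δ k < ‖z‖ ∧ ‖z‖ < ρ k}
  have hKU : K ⊆ U := fun z hz => ⟨hδk.trans_le hz.1, hz.2.trans_lt hρk⟩
  have hU : IsOpen U :=
    (isOpen_lt continuous_const continuous_norm).inter (isOpen_lt continuous_norm continuous_const)
  have hφdiff (z : ℂ) (hz : z ∈ K) : DifferentiableAt ℝ (φ k) z :=
    ((hφsmooth k).contDiffAt (hU.mem_nhds (hKU hz))).differentiableAt (by simp)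
  have hF := isC1CloseToPowOn_toPlane_comp hΦ hφdiff (fun z hz => (hk0 z hz).le)
    (fun z hz => (hk1 z hz).le)
  obtain ⟨ζ, hζc, hζper, hζ⟩ := hF.exists_sheets (by omega) (by norm_num)
  have hheight : Continuous fun t => φ k (ζ t) 2 :=
    ((continuous_apply 2).comp_continuousOn ((hφsmooth k).continuousOn.mono hKU)).comp_continuous
      hζc fun t => (hζ t).1
  obtain ⟨t, ht⟩ := (hζper.comp fun z => φ k z 2).exists_apply_add_eq hheight (by omega)
  exact (hζ t).2.2 (hφinj k (hKU (hζ _).1) (hKU (hζ t).1) (eq_of_toPlane_eq (hζ t).2.1 ht))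

/-- If embeddings of annuli δ_k < |z| < ρ_k (δ_k → 0, ρ_k → ∞)
converge in C¹_loc(ℂ∖{0}) to Φ(z) = (z^{m+1}, c), and the preimage of the cylindrical
shell 1/4 ≤ |(φ¹,φ²)| ≤ 4 stays in a fixed annulus a ≤ |z| ≤ b, then m = 0. -/
theorem multiplicity_one_of_embedded_limit (m : ℕ) (c : ℝ)
    (Φ : ℂ → V3) (hΦ : ∀ z : ℂ, Φ z = ![(z ^ (m + 1)).re, (z ^ (m + 1)).im, c])
    (δ ρ : ℕ → ℝ) (hδpos : ∀ k, 0 < δ k)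
    (hδ : Tendsto δ atTop (𝓝 0)) (hρ : Tendsto ρ atTop atTop)
    (φ : ℕ → ℂ → V3)
    (hφsmooth : ∀ k, ContDiffOn ℝ (⊤ : ℕ∞) (φ k) {z : ℂ | δ k < ‖z‖ ∧ ‖z‖ < ρ k})
    (hφinj : ∀ k, Set.InjOn (φ k) {z : ℂ | δ k < ‖z‖ ∧ ‖z‖ < ρ k})
    (hφimm : ∀ k, ∀ z ∈ {z : ℂ | δ k < ‖z‖ ∧ ‖z‖ < ρ k},
      Function.Injective (fderiv ℝ (φ k) z))
    (hC1 : ∀ K : Set ℂ, IsCompact K → K ⊆ {(0 : ℂ)}ᶜ →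
      TendstoUniformlyOn (fun k => φ k) Φ atTop K ∧
      TendstoUniformlyOn (fun k z => fderiv ℝ (φ k) z) (fun z => fderiv ℝ Φ z) atTop K)
    (a b : ℝ) (ha : 0 < a) (hab : a < b)
    (hloc : ∀ᶠ k in atTop, ∀ z : ℂ, δ k < ‖z‖ → ‖z‖ < ρ k →
      1 / 4 ≤ Real.sqrt (φ k z 0 ^ 2 + φ k z 1 ^ 2) →
      Real.sqrt (φ k z 0 ^ 2 + φ k z 1 ^ 2) ≤ 4 →
      a ≤ ‖z‖ ∧ ‖z‖ ≤ b) :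
    m = 0 :=
  multiplicity_one_of_embedded_limit_general m c Φ hΦ δ ρ hδ hρ φ hφsmooth hφinj hC1
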